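/- Let L be an Eulerian directed Laplacian and U = (L + Lᵀ)/2 its symmetrization. Then the symmetric matrix X = Lᵀ U† L satisfies U ⪯ X in the positive-semidefinite order, where U† denotes the Moore–Penrose pseudoinverse. -/

import Mathlib

open Matrix Finset

/-! With `W = L - U`, the Penrose identities turn `Lᵀ U† L - U` into `Wᵀ U† W` as soon as
`Lᵀ U† U = Lᵀ` (and its transpose `U U† L = L`), which holds when `ker U ⊆ ker Lᵀ`; and `U†` is
PSD because `U` is. Both facts come from `xᵀ U x = xᵀ L x = ∑ᵢⱼ (-Lᵢⱼ)(xᵢ - xⱼ)² / 2`, a sum of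
nonnegative terms: `U x = 0` forces `xⱼ = xᵢ` wherever `Lⱼᵢ ≠ 0`, hence `Lᵀ x = 0` by the zero
column sums. -/

/-- `L` is an Eulerian directed Laplacian: nonpositive off-diagonal entries,
zero column sums, and zero row sums. -/
def IsEulerianLaplacian {n : ℕ} (L : Matrix (Fin n) (Fin n) ℝ) : Prop :=
  (∀ i j, i ≠ j → L i j ≤ 0) ∧ (∀ j, ∑ i, L i j = 0) ∧ (∀ i, ∑ j, L i j = 0)

/-- `B` is the Moore–Penrose pseudoinverse of `A` (the four Penrose conditions). -/
def IsMoorePenrose {m : Type*} [Fintype m] [DecidableEq m]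
    (A B : Matrix m m ℝ) : Prop :=
  A * B * A = A ∧ B * A * B = B ∧ (A * B)ᵀ = A * B ∧ (B * A)ᵀ = B * A

theorem dotProduct_mulVec_eq_sum_sq {m : Type*} [Fintype m] {M : Matrix m m ℝ}
    (hrow : ∀ i, ∑ j, M i j = 0) (hcol : ∀ j, ∑ i, M i j = 0) (x : m → ℝ) :
    x ⬝ᵥ M *ᵥ x = ∑ i, ∑ j, -M i j * (x i - x j) ^ 2 / 2 := by
  have hrow' : ∑ i, ∑ j, M i j * x i ^ 2 = 0 := by simp [← sum_mul, hrow]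
  have hcol' : ∑ i, ∑ j, M i j * x j ^ 2 = 0 := by
    rw [sum_comm]; simp [← sum_mul, hcol]
  calc x ⬝ᵥ M *ᵥ x = ∑ i, ∑ j, x i * M i j * x j := by
        simp [dotProduct, mulVec, mul_sum, mul_assoc]
    _ = ∑ i, ∑ j, (-M i j * (x i - x j) ^ 2 / 2 + (M i j * x i ^ 2 + M i j * x j ^ 2) / 2) := by
        congr! 2; ring
    _ = ∑ i, ∑ j, -M i j * (x i - x j) ^ 2 / 2 := by
        simp only [sum_add_distrib, ← sum_div, hrow', hcol', add_zero, zero_div]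

theorem dotProduct_half_smul_add_transpose_mulVec {m : Type*} [Fintype m] (M : Matrix m m ℝ)
    (x : m → ℝ) : x ⬝ᵥ ((1 / 2 : ℝ) • (M + Mᵀ)) *ᵥ x = x ⬝ᵥ M *ᵥ x := by
  rw [smul_mulVec, add_mulVec, dotProduct_smul, dotProduct_add, dotProduct_transpose_mulVec,
    smul_eq_mul]
  ring

namespace IsMoorePenrose

variable {m : Type*} [Fintype m] [DecidableEq m] {A B C : Matrix m m ℝ}

theorem transpose (h : IsMoorePenrose A B) : IsMoorePenrose Aᵀ Bᵀ := by
  obtain ⟨h₁, h₂, h₃, h₄⟩ := h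
  refine ⟨?_, ?_, ?_, ?_⟩
  · simpa only [transpose_mul, Matrix.mul_assoc] using congrArg Matrix.transpose h₁
  · simpa only [transpose_mul, Matrix.mul_assoc] using congrArg Matrix.transpose h₂
  · rw [← transpose_mul, h₄]; exact h₄
  · rw [← transpose_mul, h₃]; exact h₃

theorem unique (hB : IsMoorePenrose A B) (hC : IsMoorePenrose A C) : B = C := by
  obtain ⟨hB₁, hB₂, hB₃, hB₄⟩ := hB
  obtain ⟨hC₁, hC₂, hC₃, hC₄⟩ := hC
  have hAB : A * B = A * C :=
    calc A * B = (A * C * (A * B))ᵀ := by rw [← Matrix.mul_assoc, hC₁, hB₃]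
      _ = A * B * (A * C) := by rw [transpose_mul, hB₃, hC₃]
      _ = A * C := by rw [← Matrix.mul_assoc, hB₁]
  have hBA : B * A = C * A :=
    calc B * A = (B * A * (C * A))ᵀ := by rw [Matrix.mul_assoc, ← Matrix.mul_assoc A C A, hC₁, hB₄]
      _ = C * A * (B * A) := by rw [transpose_mul, hB₄, hC₄]
      _ = C * A := by rw [Matrix.mul_assoc, ← Matrix.mul_assoc A B A, hB₁]
  calc B = B * A * B := hB₂.symm
    _ = C * A * C := by rw [Matrix.mul_assoc, hAB, ← Matrix.mul_assoc, hBA]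
    _ = C := hC₂

theorem transpose_eq_of_transpose_eq (hA : Aᵀ = A) (h : IsMoorePenrose A B) : Bᵀ = B :=
  (hA ▸ h.transpose).unique h

theorem posSemidef (hA : A.PosSemidef) (h : IsMoorePenrose A B) : B.PosSemidef := by
  have hB : Bᴴ = B := h.transpose_eq_of_transpose_eq hA.isHermitian.eq
  simpa only [hB, h.2.1] using hA.conjTranspose_mul_mul_same B

theorem mul_mul_eq_of_ker_le (h : IsMoorePenrose A B) {M : Matrix m m ℝ}
    (hker : ∀ x, A *ᵥ x = 0 → M *ᵥ x = 0) : M * B * A = M := by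
  refine ext_iff_mulVec.mpr fun x => ?_
  have hx : A *ᵥ (x - (B * A) *ᵥ x) = 0 := by
    rw [mulVec_sub, mulVec_mulVec, ← Matrix.mul_assoc, h.1, sub_self]
  have := hker _ hx
  rwa [mulVec_sub, mulVec_mulVec, ← Matrix.mul_assoc, sub_eq_zero, eq_comm] at this

end IsMoorePenrose

theorem posSemidef_transpose_mul_mul_sub {m : Type*} [Fintype m] [DecidableEq m]
    {L U Up : Matrix m m ℝ} (hU : U = (1 / 2 : ℝ) • (L + Lᵀ)) (hUpsd : U.PosSemidef)
    (hUp : IsMoorePenrose U Up) (hker : ∀ x, U *ᵥ x = 0 → Lᵀ *ᵥ x = 0) :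
    (Lᵀ * Up * L - U).PosSemidef := by
  have hUt : Uᵀ = U := hUpsd.isHermitian.eq
  have hUpt : Upᵀ = Up := hUp.transpose_eq_of_transpose_eq hUt
  have hLtUpU : Lᵀ * Up * U = Lᵀ := hUp.mul_mul_eq_of_ker_le hker
  have hUUpL : U * Up * L = L := by
    simpa only [transpose_mul, transpose_transpose, hUt, hUpt, Matrix.mul_assoc]
      using congrArg transpose hLtUpU
  have hLLt : L + Lᵀ = U + U := by rw [hU, ← add_smul]; norm_num
  have hsq : Lᵀ * Up * L - U = (L - U)ᴴ * Up * (L - U) := by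
    rw [conjTranspose_eq_transpose_of_trivial, transpose_sub, hUt, sub_mul, sub_mul, mul_sub,
      mul_sub, hLtUpU, hUUpL, hUp.1, sub_sub, ← add_sub_assoc, add_comm Lᵀ L, hLLt]
    abel
  exact hsq ▸ (hUp.posSemidef hUpsd).conjTranspose_mul_mul_same _

namespace IsEulerianLaplacian

variable {n : ℕ} {L : Matrix (Fin n) (Fin n) ℝ}

theorem neg_mul_sq_div_two_nonneg (hL : IsEulerianLaplacian L) (x : Fin n → ℝ) (i j : Fin n) :
    0 ≤ -L i j * (x i - x j) ^ 2 / 2 := by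
  rcases eq_or_ne i j with rfl | hij
  · simp
  · exact div_nonneg (mul_nonneg (neg_nonneg.mpr (hL.1 i j hij)) (sq_nonneg _)) zero_le_two

theorem dotProduct_mulVec_nonneg (hL : IsEulerianLaplacian L) (x : Fin n → ℝ) :
    0 ≤ x ⬝ᵥ L *ᵥ x := by
  rw [dotProduct_mulVec_eq_sum_sq hL.2.2 hL.2.1]
  exact sum_nonneg fun i _ => sum_nonneg fun j _ => hL.neg_mul_sq_div_two_nonneg x i j

theorem posSemidef_symmetrization (hL : IsEulerianLaplacian L) :
    ((1 / 2 : ℝ) • (L + Lᵀ)).PosSemidef := by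
  refine .of_dotProduct_mulVec_nonneg ?_ fun x => ?_
  · simp [IsHermitian, add_comm]
  · rw [star_trivial, dotProduct_half_smul_add_transpose_mulVec]
    exact hL.dotProduct_mulVec_nonneg x

theorem transpose_mulVec_eq_zero (hL : IsEulerianLaplacian L) {x : Fin n → ℝ}
    (hx : x ⬝ᵥ L *ᵥ x = 0) : Lᵀ *ᵥ x = 0 := by
  rw [dotProduct_mulVec_eq_sum_sq hL.2.2 hL.2.1] at hx
  have hterm : ∀ i j, -L i j * (x i - x j) ^ 2 / 2 = 0 := fun i j =>
    (sum_eq_zero_iff_of_nonneg fun j _ => hL.neg_mul_sq_div_two_nonneg x i j).mp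
      ((sum_eq_zero_iff_of_nonneg fun i _ => sum_nonneg fun j _ =>
        hL.neg_mul_sq_div_two_nonneg x i j).mp hx i (mem_univ i)) j (mem_univ j)
  have hconst : ∀ i j, L j i * x j = L j i * x i := by
    intro i j
    rcases (by simpa [sub_eq_zero] using hterm j i : L j i = 0 ∨ x j = x i) with h | h <;> simp [h]
  ext i
  simp [mulVec, dotProduct, hconst, ← sum_mul, hL.2.1]

end IsEulerianLaplacian

/-- For an Eulerian directed Laplacian `L` with symmetrization `U = (L + Lᵀ)/2`,
the matrix `X = Lᵀ U† L` satisfies `U ⪯ X` in the PSD order. -/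
theorem symmetrization_le {n : ℕ} (L U Up : Matrix (Fin n) (Fin n) ℝ)
    (hL : IsEulerianLaplacian L)
    (hU : U = (1 / 2 : ℝ) • (L + Lᵀ))
    (hUp : IsMoorePenrose U Up) :
    (Lᵀ * Up * L - U).PosSemidef := by
  refine posSemidef_transpose_mul_mul_sub hU (hU ▸ hL.posSemidef_symmetrization) hUp
    fun x hx => hL.transpose_mulVec_eq_zero ?_
  rw [← dotProduct_half_smul_add_transpose_mulVec, ← hU, hx, dotProduct_zero]
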